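/- Let Y ∈ ℝ^{N×T} with SVD Y = UΣVᵀ, and for x > 0 define the soft-thresholding operator S_x(Y) = UΣ_xVᵀ where Σ_x replaces each singular value σ_j by max{0, σ_j − x}. Then S_{λ/2}(Y) is the unique minimizer over Γ ∈ ℝ^{N×T} of (1/2)‖Y − Γ‖_F² + (λ/2)‖Γ‖₊. -/

import Mathlib

/-!
Put `c = λ/2`. Soft-thresholding splits `Σ = Σ_c + min(Σ, c)`, so the residual
`W = Y - S_c(Y) = U min(Σ, c) Vᵀ` has operator norm at most `c`. By the duality between the
operator and the nuclear norm (evaluate the trace in an orthonormal eigenbasis of `ΓᵀΓ`),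
`⟪W, Γ⟫ ≤ c ‖Γ‖₊` for every `Γ`, and equality holds at
`Γ = S_c(Y)` since `min(σ, c) = c` wherever `max(0, σ - c) ≠ 0`. So `W` is a subgradient of
`c ‖·‖₊` at `S_c(Y)`, and expanding the square gives
`f(Γ) ≥ f(S_c(Y)) + ½ ‖Γ - S_c(Y)‖_F²`: minimality and uniqueness at once.
-/

open Matrix BigOperators

noncomputable def frobNorm {m n : Type*} [Fintype m] [Fintype n] (A : Matrix m n ℝ) : ℝ :=
  Real.sqrt (∑ i, ∑ j, (A i j) ^ 2)

noncomputable def nuclearNorm {m n : Type*} [Fintype m] [Fintype n] [DecidableEq n]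
    (A : Matrix m n ℝ) : ℝ :=
  ∑ j, Real.sqrt ((Matrix.isHermitian_conjTranspose_mul_self A).eigenvalues j)

noncomputable def opNorm {m n : Type*} [Fintype m] [Fintype n] [DecidableEq n]
    (A : Matrix m n ℝ) : ℝ :=
  ‖LinearMap.toContinuousLinearMap (Matrix.toEuclideanLin A)‖

open WithLp
open scoped InnerProductSpace

lemma EuclideanSpace.real_norm_sq_eq_dotProduct {n : Type*} [Fintype n]
    (x : EuclideanSpace ℝ n) : ‖x‖ ^ 2 = ofLp x ⬝ᵥ ofLp x := by
  rw [← real_inner_self_eq_norm_sq, EuclideanSpace.inner_eq_star_dotProduct]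
  simp

section OperatorNorm

variable {m n : Type*} [Fintype m] [Fintype n] [DecidableEq n]

lemma norm_toEuclideanLin_sq (A : Matrix m n ℝ) (x : EuclideanSpace ℝ n) :
    ‖toEuclideanLin A x‖ ^ 2 = ofLp x ⬝ᵥ (Aᵀ * A) *ᵥ ofLp x := by
  rw [EuclideanSpace.real_norm_sq_eq_dotProduct, ← mulVec_mulVec, dotProduct_mulVec,
    vecMul_transpose]
  rfl

lemma norm_toEuclideanLin_of_transpose_mul_self {U : Matrix m n ℝ} (hU : Uᵀ * U = 1)
    (x : EuclideanSpace ℝ n) : ‖toEuclideanLin U x‖ = ‖x‖ := by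
  rw [← sq_eq_sq₀ (norm_nonneg _) (norm_nonneg _), norm_toEuclideanLin_sq, hU, one_mulVec,
    EuclideanSpace.real_norm_sq_eq_dotProduct]

lemma norm_toEuclideanLin_le_opNorm (A : Matrix m n ℝ) (x : EuclideanSpace ℝ n) :
    ‖toEuclideanLin A x‖ ≤ opNorm A * ‖x‖ :=
  (LinearMap.toContinuousLinearMap (toEuclideanLin A)).le_opNorm x

lemma opNorm_le_of_forall {A : Matrix m n ℝ} {c : ℝ} (hc : 0 ≤ c)
    (h : ∀ x, ‖toEuclideanLin A x‖ ≤ c * ‖x‖) : opNorm A ≤ c :=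
  ContinuousLinearMap.opNorm_le_bound _ hc h

lemma opNorm_mul_mul_transpose_le [DecidableEq m] {p : Type*} [Fintype p]
    {U : Matrix p m ℝ} {V : Matrix n n ℝ} (hU : Uᵀ * U = 1) (hV : Vᵀ * V = 1)
    (A : Matrix m n ℝ) : opNorm (U * A * Vᵀ) ≤ opNorm A := by
  have hVt : Vᵀᵀ * Vᵀ = 1 := by rw [transpose_transpose, mul_eq_one_comm.mp hV]
  refine opNorm_le_of_forall (norm_nonneg _) fun x => ?_
  have hcomp : toEuclideanLin (U * A * Vᵀ) x =
      toEuclideanLin U (toEuclideanLin A (toEuclideanLin Vᵀ x)) := by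
    simp [toLpLin_apply, mulVec_mulVec]
  rw [hcomp, norm_toEuclideanLin_of_transpose_mul_self hU,
    ← norm_toEuclideanLin_of_transpose_mul_self hVt x]
  exact norm_toEuclideanLin_le_opNorm A _

end OperatorNorm

section NuclearNorm

variable {m n : Type*} [Fintype m] [Fintype n] [DecidableEq n]

open Polynomial in
lemma Matrix.IsHermitian.sum_comp_eigenvalues_of_charpoly_eq {A : Matrix n n ℝ}
    (hA : A.IsHermitian) {d : n → ℝ} (h : A.charpoly = (diagonal d).charpoly) (f : ℝ → ℝ) :
    ∑ i, f (hA.eigenvalues i) = ∑ i, f (d i) := by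
  have hroots : Finset.univ.val.map hA.eigenvalues = Finset.univ.val.map d := by
    have := hA.roots_charpoly_eq_eigenvalues
    rw [h, charpoly_diagonal,
      roots_prod _ _ (Finset.prod_ne_zero_iff.mpr fun i _ => X_sub_C_ne_zero _)] at this
    simp_rw [roots_X_sub_C, Multiset.bind_singleton] at this
    simpa using this.symm
  have := congrArg (fun s => (s.map f).sum) hroots
  simp only [Multiset.map_map] at this
  exact this

lemma nuclearNorm_nonneg (A : Matrix m n ℝ) : 0 ≤ nuclearNorm A :=
  Finset.sum_nonneg fun _ _ => Real.sqrt_nonneg _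

lemma nuclearNorm_mul_mul_transpose [DecidableEq m] {p : Type*} [Fintype p]
    {U : Matrix p m ℝ} {V : Matrix n n ℝ} (hU : Uᵀ * U = 1) (hV : Vᵀ * V = 1)
    (A : Matrix m n ℝ) : nuclearNorm (U * A * Vᵀ) = nuclearNorm A := by
  have hcharpoly : ((U * A * Vᵀ)ᴴ * (U * A * Vᵀ)).charpoly = (Aᴴ * A).charpoly := by
    simp only [conjTranspose_eq_transpose_of_trivial, transpose_mul, transpose_transpose]
    rw [show V * (Aᵀ * Uᵀ) * (U * A * Vᵀ) = V * (Aᵀ * A * Vᵀ) by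
      simp only [Matrix.mul_assoc, ← Matrix.mul_assoc Uᵀ U, hU, Matrix.one_mul],
      charpoly_mul_comm, Matrix.mul_assoc, hV, Matrix.mul_one]
  unfold nuclearNorm
  rw [(IsHermitian.eigenvalues_eq_eigenvalues_iff _ _).mpr hcharpoly]

lemma Matrix.trace_eq_sum_inner_toEuclideanLin {𝕜 ι : Type*} [RCLike 𝕜] [Fintype ι]
    (M : Matrix n n 𝕜) (b : OrthonormalBasis ι 𝕜 (EuclideanSpace 𝕜 n)) :
    M.trace = ∑ j, ⟪b j, toEuclideanLin M (b j)⟫_𝕜 := by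
  rw [← LinearMap.trace_eq_sum_inner,
    LinearMap.trace_eq_matrix_trace 𝕜 (EuclideanSpace.basisFun n 𝕜).toBasis,
    toEuclideanLin_eq_toLin_orthonormal, LinearMap.toMatrix_toLin]

lemma inner_toEuclideanLin_transpose_mul (A B : Matrix m n ℝ) (x y : EuclideanSpace ℝ n) :
    ⟪x, toEuclideanLin (Aᵀ * B) y⟫_ℝ = ⟪toEuclideanLin A x, toEuclideanLin B y⟫_ℝ := by
  simp only [EuclideanSpace.inner_eq_star_dotProduct, toLpLin_apply, star_trivial,
    ← mulVec_mulVec, dotProduct_mulVec, mulVec_transpose]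

lemma norm_toEuclideanLin_eigenvectorBasis (Γ : Matrix m n ℝ) (j : n) :
    ‖toEuclideanLin Γ ((isHermitian_conjTranspose_mul_self Γ).eigenvectorBasis j)‖ =
      √((isHermitian_conjTranspose_mul_self Γ).eigenvalues j) := by
  rw [← Real.sqrt_sq (norm_nonneg _), ← real_inner_self_eq_norm_sq,
    ← inner_toEuclideanLin_transpose_mul, ← conjTranspose_eq_transpose_of_trivial,
    toLpLin_apply, IsHermitian.mulVec_eigenvectorBasis]
  simp [inner_smul_right]

lemma trace_transpose_mul_le_opNorm_mul_nuclearNorm (W Γ : Matrix m n ℝ) :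
    (Wᵀ * Γ).trace ≤ opNorm W * nuclearNorm Γ := by
  let v := (isHermitian_conjTranspose_mul_self Γ).eigenvectorBasis
  calc (Wᵀ * Γ).trace = ∑ j, ⟪toEuclideanLin W (v j), toEuclideanLin Γ (v j)⟫_ℝ := by
        simp only [trace_eq_sum_inner_toEuclideanLin _ v, inner_toEuclideanLin_transpose_mul]
    _ ≤ ∑ j, opNorm W * √((isHermitian_conjTranspose_mul_self Γ).eigenvalues j) := by
        refine Finset.sum_le_sum fun j _ => (real_inner_le_norm _ _).trans ?_
        rw [norm_toEuclideanLin_eigenvectorBasis]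
        gcongr
        simpa [v.norm_eq_one j] using norm_toEuclideanLin_le_opNorm W (v j)
    _ = opNorm W * nuclearNorm Γ := (Finset.mul_sum _ _ _).symm

end NuclearNorm

section Frobenius

variable {m n : Type*} [Fintype m] [Fintype n]

lemma frobNorm_sq (A : Matrix m n ℝ) : frobNorm A ^ 2 = vec A ⬝ᵥ vec A := by
  rw [frobNorm, Real.sq_sqrt (by positivity), dotProduct, Fintype.sum_prod_type,
    Finset.sum_comm]
  simp [vec, sq]

lemma frobNorm_eq_zero_iff {A : Matrix m n ℝ} : frobNorm A = 0 ↔ A = 0 := by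
  rw [← sq_eq_zero_iff, frobNorm_sq, dotProduct_self_eq_zero, vec_eq_zero_iff]

lemma trace_transpose_mul_eq_sum_sum {R : Type*} [AddCommMonoid R] [Mul R] (A B : Matrix m n R) :
    (Aᵀ * B).trace = ∑ j, ∑ i, A i j * B i j := by
  rw [← vec_dotProduct_vec, dotProduct, Fintype.sum_prod_type]
  rfl

lemma trace_transpose_mul_mul_mul [DecidableEq m] [DecidableEq n] {p q : Type*} [Fintype p]
    [Fintype q] {U : Matrix p m ℝ} {V : Matrix q n ℝ} (hU : Uᵀ * U = 1) (hV : Vᵀ * V = 1)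
    (A B : Matrix m n ℝ) : ((U * A * Vᵀ)ᵀ * (U * B * Vᵀ)).trace = (Aᵀ * B).trace := by
  rw [transpose_mul, transpose_mul, transpose_transpose,
    show V * (Aᵀ * Uᵀ) * (U * B * Vᵀ) = V * (Aᵀ * (Uᵀ * U) * B * Vᵀ) by
      simp only [Matrix.mul_assoc],
    hU, Matrix.mul_one, trace_mul_comm, Matrix.mul_assoc, hV, Matrix.mul_one]

lemma half_frobNorm_sq_add_le_of_subgradient {g : Matrix m n ℝ → ℝ} {Y S : Matrix m n ℝ}
    (hg : ∀ Γ, ((Y - S)ᵀ * Γ).trace ≤ g Γ) (hS : ((Y - S)ᵀ * S).trace = g S)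
    (Γ : Matrix m n ℝ) :
    1 / 2 * frobNorm (Y - S) ^ 2 + g S + 1 / 2 * frobNorm (Γ - S) ^ 2 ≤
      1 / 2 * frobNorm (Y - Γ) ^ 2 + g Γ := by
  have hΓ := hg Γ
  simp only [← vec_dotProduct_vec] at hΓ hS
  simp only [frobNorm_sq, vec_sub, sub_dotProduct, dotProduct_sub, dotProduct_comm (vec Y)] at *
  linarith [dotProduct_comm (vec S) (vec Γ)]

end Frobenius

lemma Fin.sum_eq_of_forall_val_ne {M : Type*} [AddCommMonoid M] {n : ℕ} (k : ℕ)
    {g : Fin n → M} (hg : ∀ i : Fin n, (i : ℕ) ≠ k → g i = 0) :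
    ∑ i, g i = if h : k < n then g ⟨k, h⟩ else 0 := by
  split_ifs with h
  · exact Fintype.sum_eq_single _ fun i hi => hg i fun hik => hi (Fin.ext hik)
  · exact Fintype.sum_eq_zero _ fun i => hg i fun hik => h (hik ▸ i.isLt)

def IsRectDiagonal {m n : ℕ} (A : Matrix (Fin m) (Fin n) ℝ) : Prop :=
  ∀ (i : Fin m) (j : Fin n), (i : ℕ) ≠ j → A i j = 0

namespace IsRectDiagonal

variable {m n : ℕ} {A : Matrix (Fin m) (Fin n) ℝ}

lemma transpose_mul_self (hA : IsRectDiagonal A) :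
    Aᵀ * A = diagonal fun j => ∑ i, A i j ^ 2 := by
  ext j j'
  rcases eq_or_ne j j' with rfl | hjj'
  · simp [mul_apply, sq]
  · rw [diagonal_apply_ne _ hjj', mul_apply]
    refine Fintype.sum_eq_zero _ fun i => ?_
    by_cases hij : (i : ℕ) = j
    · rw [transpose_apply, hA i j' (hij ▸ fun h => hjj' (Fin.ext h)), mul_zero]
    · rw [transpose_apply, hA i j hij, zero_mul]

lemma sum_col_sq_le (hA : IsRectDiagonal A) {c : ℝ} (hAc : ∀ i j, |A i j| ≤ c)
    (j : Fin n) : ∑ i, A i j ^ 2 ≤ c ^ 2 := by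
  rw [Fin.sum_eq_of_forall_val_ne j fun i hi => by rw [hA i j hi, sq, zero_mul]]
  split_ifs
  · exact sq_le_sq' (abs_le.mp (hAc _ _)).1 (abs_le.mp (hAc _ _)).2
  · positivity

lemma sqrt_sum_col_sq (hA : IsRectDiagonal A) (hA0 : ∀ i j, 0 ≤ A i j) (j : Fin n) :
    √(∑ i, A i j ^ 2) = ∑ i, A i j := by
  rw [Fin.sum_eq_of_forall_val_ne j fun i hi => by rw [hA i j hi, sq, zero_mul],
    Fin.sum_eq_of_forall_val_ne j fun i hi => hA i j hi]
  split_ifs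
  · exact Real.sqrt_sq (hA0 _ _)
  · exact Real.sqrt_zero

lemma opNorm_le (hA : IsRectDiagonal A) {c : ℝ} (hc : 0 ≤ c) (hAc : ∀ i j, |A i j| ≤ c) :
    opNorm A ≤ c := by
  refine opNorm_le_of_forall hc fun x => ?_
  refine (pow_le_pow_iff_left₀ (norm_nonneg _) (by positivity) two_ne_zero).mp ?_
  rw [mul_pow, norm_toEuclideanLin_sq, hA.transpose_mul_self,
    EuclideanSpace.real_norm_sq_eq_dotProduct]
  simp only [dotProduct, mulVec_diagonal, Finset.mul_sum]
  refine Finset.sum_le_sum fun j _ => ?_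
  nlinarith [hA.sum_col_sq_le hAc j, mul_self_nonneg (x j)]

lemma nuclearNorm_eq (hA : IsRectDiagonal A) (hA0 : ∀ i j, 0 ≤ A i j) :
    nuclearNorm A = ∑ j, ∑ i, A i j := by
  have h : (Aᴴ * A).charpoly = (diagonal fun j => ∑ i, A i j ^ 2).charpoly := by
    rw [conjTranspose_eq_transpose_of_trivial, hA.transpose_mul_self]
  rw [nuclearNorm, IsHermitian.sum_comp_eigenvalues_of_charpoly_eq _ h]
  exact Finset.sum_congr rfl fun j _ => hA.sqrt_sum_col_sq hA0 j

end IsRectDiagonal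

lemma sub_max_zero_sub_eq_min (s c : ℝ) : s - max 0 (s - c) = min s c := by
  rcases le_total s c with h | h <;> simp [h, sub_nonpos.mpr, sub_nonneg.mpr]

lemma min_mul_max_zero_sub (s c : ℝ) : min s c * max 0 (s - c) = c * max 0 (s - c) := by
  rcases le_total s c with h | h <;> simp [h, sub_nonpos.mpr]

theorem soft_thresholding_prox_general
    (N T : ℕ) (Y : Matrix (Fin N) (Fin T) ℝ)
    (U : Matrix (Fin N) (Fin N) ℝ) (V : Matrix (Fin T) (Fin T) ℝ)
    (Sig : Matrix (Fin N) (Fin T) ℝ)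
    (hU : Uᵀ * U = 1) (hV : Vᵀ * V = 1)
    (hdiag : ∀ (i : Fin N) (j : Fin T), (i : ℕ) ≠ (j : ℕ) → Sig i j = 0)
    (hnonneg : ∀ (i : Fin N) (j : Fin T), 0 ≤ Sig i j)
    (hSVD : Y = U * Sig * Vᵀ)
    (lam : ℝ) (hlam : 0 < lam)
    (Sx : Matrix (Fin N) (Fin T) ℝ)
    (hSx : Sx = U * (Matrix.of fun (i : Fin N) (j : Fin T) => max 0 (Sig i j - lam / 2)) * Vᵀ) :
    (∀ Γ : Matrix (Fin N) (Fin T) ℝ,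
        (1 / 2) * frobNorm (Y - Sx) ^ 2 + lam / 2 * nuclearNorm Sx ≤
          (1 / 2) * frobNorm (Y - Γ) ^ 2 + lam / 2 * nuclearNorm Γ) ∧
      ∀ Γ : Matrix (Fin N) (Fin T) ℝ,
        (1 / 2) * frobNorm (Y - Γ) ^ 2 + lam / 2 * nuclearNorm Γ =
          (1 / 2) * frobNorm (Y - Sx) ^ 2 + lam / 2 * nuclearNorm Sx → Γ = Sx := by
  set c := lam / 2
  have hc : 0 ≤ c := by positivity
  set E : Matrix (Fin N) (Fin T) ℝ := of fun i j => max 0 (Sig i j - c)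
  set D : Matrix (Fin N) (Fin T) ℝ := of fun i j => min (Sig i j) c
  have hE : IsRectDiagonal E := fun i j h => by simp [E, hdiag i j h, hc]
  have hD : IsRectDiagonal D := fun i j h => by simp [D, hdiag i j h, hc]
  have hYSx : Y - Sx = U * D * Vᵀ := by
    rw [hSVD, hSx, ← Matrix.sub_mul, ← Matrix.mul_sub]
    congr 2
    ext i j
    exact sub_max_zero_sub_eq_min _ _
  have hopNorm : opNorm (Y - Sx) ≤ c := by
    rw [hYSx]
    refine (opNorm_mul_mul_transpose_le hU hV D).trans (hD.opNorm_le hc fun i j => ?_)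
    exact abs_le.mpr ⟨le_min (by linarith [hnonneg i j]) (by linarith), min_le_right _ _⟩
  have hsub : ∀ Γ, ((Y - Sx)ᵀ * Γ).trace ≤ c * nuclearNorm Γ := fun Γ =>
    (trace_transpose_mul_le_opNorm_mul_nuclearNorm _ Γ).trans
      (mul_le_mul_of_nonneg_right hopNorm (nuclearNorm_nonneg Γ))
  have hSx_sub : ((Y - Sx)ᵀ * Sx).trace = c * nuclearNorm Sx := by
    rw [hYSx, hSx, trace_transpose_mul_mul_mul hU hV, nuclearNorm_mul_mul_transpose hU hV,
      hE.nuclearNorm_eq fun _ _ => le_max_left _ _, trace_transpose_mul_eq_sum_sum]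
    simp only [D, E, of_apply, min_mul_max_zero_sub, Finset.mul_sum]
  have gap := half_frobNorm_sq_add_le_of_subgradient (g := fun Γ => c * nuclearNorm Γ)
    hsub hSx_sub
  refine ⟨fun Γ => ?_, fun Γ hΓ => ?_⟩
  · linarith [gap Γ, sq_nonneg (frobNorm (Γ - Sx))]
  · have h0 : frobNorm (Γ - Sx) ^ 2 = 0 := by
      linarith [gap Γ, sq_nonneg (frobNorm (Γ - Sx))]
    exact sub_eq_zero.mp (frobNorm_eq_zero_iff.mp (pow_eq_zero_iff two_ne_zero |>.mp h0))

/-- Singular value soft-thresholding: if Y = UΣVᵀ is an SVD, then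
S_{λ/2}(Y) = UΣ_{λ/2}Vᵀ (each singular value σ replaced by max{0, σ − λ/2}) is the unique
minimizer of Γ ↦ (1/2)‖Y − Γ‖_F² + (λ/2)‖Γ‖₊. -/
theorem soft_thresholding_prox
    (N T : ℕ) (Y : Matrix (Fin N) (Fin T) ℝ)
    (U : Matrix (Fin N) (Fin N) ℝ) (V : Matrix (Fin T) (Fin T) ℝ)
    (Sig : Matrix (Fin N) (Fin T) ℝ)
    (hU : Uᵀ * U = 1) (hV : Vᵀ * V = 1)
    (hdiag : ∀ (i : Fin N) (j : Fin T), (i : ℕ) ≠ (j : ℕ) → Sig i j = 0)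
    (hnonneg : ∀ (i : Fin N) (j : Fin T), 0 ≤ Sig i j)
    (hdesc : ∀ (i i' : Fin N) (j j' : Fin T),
      (i : ℕ) = (j : ℕ) → (i' : ℕ) = (j' : ℕ) → i ≤ i' → Sig i' j' ≤ Sig i j)
    (hSVD : Y = U * Sig * Vᵀ)
    (lam : ℝ) (hlam : 0 < lam)
    (Sx : Matrix (Fin N) (Fin T) ℝ)
    (hSx : Sx = U * (Matrix.of fun (i : Fin N) (j : Fin T) => max 0 (Sig i j - lam / 2)) * Vᵀ) :
    (∀ Γ : Matrix (Fin N) (Fin T) ℝ,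
        (1 / 2) * frobNorm (Y - Sx) ^ 2 + lam / 2 * nuclearNorm Sx ≤
          (1 / 2) * frobNorm (Y - Γ) ^ 2 + lam / 2 * nuclearNorm Γ) ∧
      ∀ Γ : Matrix (Fin N) (Fin T) ℝ,
        (1 / 2) * frobNorm (Y - Γ) ^ 2 + lam / 2 * nuclearNorm Γ =
          (1 / 2) * frobNorm (Y - Sx) ^ 2 + lam / 2 * nuclearNorm Sx → Γ = Sx :=
  soft_thresholding_prox_general N T Y U V Sig hU hV hdiag hnonneg hSVD lam hlam Sx hSx
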